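/- Let 𝓛 be the operator defined by 𝓛g(x) = ((x+3)/4)·g((x+2)/3)³ + ((x+2)/2)·(g((x+1)/3)² − g((x+2)/3)·g((x+1)/3)²) + ((x+1)/4)·(g(x/3) − 2·g((x+1)/3)·g(x/3) − g((x+2)/3)²·g(x/3) + 2·g((x+2)/3)·g((x+1)/3)·g(x/3)). If g₁, g₂ : [0,1] → [0,1] are monotone increasing with g₁ ≥ g₂ on [0,1], then 𝓛g₁ ≥ 𝓛g₂ on [0,1]. -/
import Mathlib


noncomputable def Lop (g : ℝ → ℝ) (x : ℝ) : ℝ :=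
  ((x+3)/4) * g ((x+2)/3)^3
  + ((x+2)/2) * (g ((x+1)/3)^2 - g ((x+2)/3) * g ((x+1)/3)^2)
  + ((x+1)/4) * (g (x/3) - 2 * g ((x+1)/3) * g (x/3)
      - g ((x+2)/3)^2 * g (x/3) + 2 * g ((x+2)/3) * g ((x+1)/3) * g (x/3))

lemma key (x a₁ b₁ c₁ a₂ b₂ c₂ : ℝ)
    (hx0 : 0 ≤ x) (hx1 : x ≤ 1)
    (ha₂0 : 0 ≤ a₂) (hc₁1 : c₁ ≤ 1)
    (hab₁ : a₁ ≤ b₁) (hbc₁ : b₁ ≤ c₁)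
    (hab₂ : a₂ ≤ b₂) (hbc₂ : b₂ ≤ c₂)
    (haa : a₂ ≤ a₁) (hbb : b₂ ≤ b₁) (hcc : c₂ ≤ c₁) :
    ((x+3)/4) * c₂^3 + ((x+2)/2) * (b₂^2 - c₂*b₂^2)
      + ((x+1)/4) * (a₂ - 2*b₂*a₂ - c₂^2*a₂ + 2*c₂*b₂*a₂)
    ≤ ((x+3)/4) * c₁^3 + ((x+2)/2) * (b₁^2 - c₁*b₁^2)
      + ((x+1)/4) * (a₁ - 2*b₁*a₁ - c₁^2*a₁ + 2*c₁*b₁*a₁) := by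
  have hb₂0 : 0 ≤ b₂ := le_trans ha₂0 hab₂
  have hc₂0 : 0 ≤ c₂ := le_trans hb₂0 hbc₂
  have hT1 : 0 ≤ ((x+1)/4) * (a₁-a₂) * ((1-c₁)*(1+c₁-2*b₁)) := by
    apply mul_nonneg
    · apply mul_nonneg <;> nlinarith
    · apply mul_nonneg <;> nlinarith
  have hT2 : 0 ≤ (b₁-b₂) * (1-c₁) * (((x+2)/2)*(b₁+b₂) - 2*((x+1)/4)*a₂) := by
    apply mul_nonneg
    · apply mul_nonneg <;> nlinarith
    · nlinarith
  have hT3 : 0 ≤ (c₁-c₂) * (((x+3)/4)*(c₁^2+c₁*c₂+c₂^2) - ((x+2)/2)*b₂^2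
      - ((x+1)/4)*a₂*(c₁+c₂) + 2*((x+1)/4)*a₂*b₂) := by
    apply mul_nonneg
    · linarith
    · have hc₁b : b₂ ≤ c₁ := le_trans hbc₂ hcc
      have p1 : 0 ≤ (b₂-a₂)*(c₁+c₂-2*b₂) := by
        apply mul_nonneg <;> linarith
      have p2 : 0 ≤ (c₁-b₂)*c₁ := mul_nonneg (by linarith) (by linarith)
      have p3 : 0 ≤ (c₁-b₂)*c₂ := mul_nonneg (by linarith) hc₂0
      have p4 : 0 ≤ (c₁-b₂)*b₂ := mul_nonneg (by linarith) hb₂0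
      have p5 : 0 ≤ (c₂-b₂)*c₂ := mul_nonneg (by linarith) hc₂0
      have p6 : 0 ≤ (c₂-b₂)*b₂ := mul_nonneg (by linarith) hb₂0
      nlinarith [p1, p2, p3, p4, p5, p6, sq_nonneg b₂,
        mul_nonneg hx0 p1, mul_nonneg hx0 p2, mul_nonneg hx0 p3,
        mul_nonneg hx0 p4, mul_nonneg hx0 p5, mul_nonneg hx0 p6,
        mul_nonneg hx0 (sq_nonneg b₂)]
  have hid : (((x+3)/4) * c₁^3 + ((x+2)/2) * (b₁^2 - c₁*b₁^2)
      + ((x+1)/4) * (a₁ - 2*b₁*a₁ - c₁^2*a₁ + 2*c₁*b₁*a₁))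
    - (((x+3)/4) * c₂^3 + ((x+2)/2) * (b₂^2 - c₂*b₂^2)
      + ((x+1)/4) * (a₂ - 2*b₂*a₂ - c₂^2*a₂ + 2*c₂*b₂*a₂))
    = ((x+1)/4) * (a₁-a₂) * ((1-c₁)*(1+c₁-2*b₁))
      + (b₁-b₂) * (1-c₁) * (((x+2)/2)*(b₁+b₂) - 2*((x+1)/4)*a₂)
      + (c₁-c₂) * (((x+3)/4)*(c₁^2+c₁*c₂+c₂^2) - ((x+2)/2)*b₂^2
        - ((x+1)/4)*a₂*(c₁+c₂) + 2*((x+1)/4)*a₂*b₂) := by ring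
  linarith

theorem stmt5 (g₁ g₂ : ℝ → ℝ)
    (hmem₁ : ∀ x ∈ Set.Icc (0:ℝ) 1, g₁ x ∈ Set.Icc (0:ℝ) 1)
    (hmem₂ : ∀ x ∈ Set.Icc (0:ℝ) 1, g₂ x ∈ Set.Icc (0:ℝ) 1)
    (hmono₁ : MonotoneOn g₁ (Set.Icc (0:ℝ) 1))
    (hmono₂ : MonotoneOn g₂ (Set.Icc (0:ℝ) 1))
    (hle : ∀ x ∈ Set.Icc (0:ℝ) 1, g₂ x ≤ g₁ x) :
    ∀ x ∈ Set.Icc (0:ℝ) 1, Lop g₂ x ≤ Lop g₁ x := by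
  intro x hx
  obtain ⟨hx0, hx1⟩ := hx
  have h1 : x/3 ∈ Set.Icc (0:ℝ) 1 := ⟨by linarith, by linarith⟩
  have h2 : (x+1)/3 ∈ Set.Icc (0:ℝ) 1 := ⟨by linarith, by linarith⟩
  have h3 : (x+2)/3 ∈ Set.Icc (0:ℝ) 1 := ⟨by linarith, by linarith⟩
  have l12 : x/3 ≤ (x+1)/3 := by linarith
  have l23 : (x+1)/3 ≤ (x+2)/3 := by linarith
  have := key x (g₁ (x/3)) (g₁ ((x+1)/3)) (g₁ ((x+2)/3))
      (g₂ (x/3)) (g₂ ((x+1)/3)) (g₂ ((x+2)/3)) hx0 hx1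
      (hmem₂ _ h1).1 (hmem₁ _ h3).2
      (hmono₁ h1 h2 l12) (hmono₁ h2 h3 l23)
      (hmono₂ h1 h2 l12) (hmono₂ h2 h3 l23)
      (hle _ h1) (hle _ h2) (hle _ h3)
  simpa [Lop] using this
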